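/- In an aggregative binary-action game with thresholds c_1 ≤ c_2 ≤ ... ≤ c_n (each c_i between 1 and n−1), where player i strictly prefers action 1 if and only if the number of other players taking action 1 is at least c_i, an action profile a is a pure Nash equilibrium if and only if the set of players taking action 1 equals {1,...,k} for some k ∈ {0,...,n} with: k=0, or (c_k ≤ k−1 and (k=n or c_{k+1} > k)). -/

import Mathlib

/-!
Let `m` be the number of players choosing `1`. A player choosing `1` sees `m - 1` others, one
choosing `0` sees `m`, so `a` is an equilibrium iff every `1`-player has threshold `< m` and every
`0`-player threshold `> m`. With monotone thresholds the `1`-players are then downward closed, hence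
exactly the first `m` players, and the conditions reduce to the two boundary players `m - 1`, `m`.
-/

open Finset

section ThresholdGame

variable {ι : Type*}

lemma Finset.filter_ne_and_eq_erase [Fintype ι] [DecidableEq ι] (p : ι → Prop) [DecidablePred p]
    (i : ι) : ({j | j ≠ i ∧ p j} : Finset ι) = ({j | p j} : Finset ι).erase i := by
  ext j
  simp [and_comm]

lemma isNash_iff_separated [Fintype ι] [DecidableEq ι] (c : ι → ℕ) (a : ι → Bool) :
    (∀ i, a i = true ↔ c i ≤ #{j | j ≠ i ∧ a j = true}) ↔
      ∀ i, (a i = true → c i < #{j | a j = true}) ∧ (a i = false → #{j | a j = true} < c i) := by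
  refine forall_congr' fun i => ?_
  rw [filter_ne_and_eq_erase]
  cases hi : a i
  · rw [erase_eq_of_notMem (by simp [hi])]
    simp
  · have hmem : i ∈ ({j | a j = true} : Finset ι) := by simp [hi]
    have hpos := card_pos.2 ⟨i, hmem⟩
    rw [card_erase_of_mem hmem]
    simp only [true_iff, forall_const, Bool.true_eq_false, false_imp_iff, and_true]
    omega

lemma downwardClosed_of_separated [Preorder ι] {c : ι → ℕ} (hc : Monotone c) {a : ι → Bool}
    {m : ℕ} (hsep : ∀ i, (a i = true → c i < m) ∧ (a i = false → m < c i)) :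
    ∀ i j, j ≤ i → a i = true → a j = true := by
  intro i j hji hi
  by_contra hj
  have := (hsep i).1 hi
  have := (hsep j).2 (by simpa using hj)
  have := hc hji
  omega

lemma separated_of_initialSegment {n : ℕ} {c : Fin n → ℕ} (hmono : Monotone c)
    (hc : ∀ i, 1 ≤ c i) {a : Fin n → Bool} {k : ℕ} (hseg : ∀ i : Fin n, a i = true ↔ (i : ℕ) < k)
    (hk : k = 0 ∨ ∃ h1 : k - 1 < n, c ⟨k - 1, h1⟩ ≤ k - 1 ∧
      (k = n ∨ ∃ h2 : k < n, k < c ⟨k, h2⟩)) :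
    ∀ i, (a i = true → c i < k) ∧ (a i = false → k < c i) := by
  intro i
  constructor
  · intro hi
    have hik := (hseg i).1 hi
    obtain ⟨hk1, hck, -⟩ := hk.resolve_left (by omega)
    have := hmono (show i ≤ ⟨k - 1, hk1⟩ from Fin.le_def.2 (by simp only; omega))
    omega
  · intro hi
    have hik : k ≤ i := by simpa [hi] using (hseg i).not
    rcases hk with rfl | ⟨-, -, rfl | ⟨hkn, hck⟩⟩
    · exact hc i
    · exact absurd i.isLt (by omega)
    · have := hmono (show (⟨k, hkn⟩ : Fin n) ≤ i from Fin.le_def.2 hik)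
      omega

end ThresholdGame

/-- In an aggregative binary-action game with nondecreasing thresholds
`c 0 ≤ … ≤ c (n-1)` (each between `1` and `n-1`), a profile is a pure Nash
equilibrium iff the set of players playing `1` is an initial segment
`{0, …, k-1}` with `k = 0`, or `c (k-1) ≤ k-1` and (`k = n` or `c k > k`). -/
theorem stmt6 (n : ℕ) (c : Fin n → ℕ) (hmono : Monotone c)
    (hc : ∀ i, 1 ≤ c i ∧ c i ≤ n - 1) (a : Fin n → Bool) :
    (∀ i, a i = true ↔
        c i ≤ (Finset.univ.filter (fun j => j ≠ i ∧ a j = true)).card) ↔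
      ∃ k : ℕ, k ≤ n ∧ (∀ i : Fin n, a i = true ↔ (i : ℕ) < k) ∧
        (k = 0 ∨ ∃ h1 : k - 1 < n, c ⟨k - 1, h1⟩ ≤ k - 1 ∧
          (k = n ∨ ∃ h2 : k < n, k < c ⟨k, h2⟩)) := by
  rw [isNash_iff_separated]
  set m := #{j | a j = true}
  constructor
  · intro hsep
    have hseg : ∀ i : Fin n, a i = true ↔ (i : ℕ) < m := fun i =>
      (Fin.lt_card_filter_univ_iff_apply_of_imp _ (downwardClosed_of_separated hmono hsep)).symm
    have hmn : m ≤ n := card_le_univ _ |>.trans_eq (Fintype.card_fin n)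
    refine ⟨m, hmn, hseg, ?_⟩
    rcases Nat.eq_zero_or_pos m with hm0 | hmpos
    · exact Or.inl hm0
    refine Or.inr ⟨by omega, ?_, ?_⟩
    · have := (hsep ⟨m - 1, by omega⟩).1 ((hseg _).2 (by simp only; omega))
      omega
    · rcases hmn.eq_or_lt with hmn | hmn
      · exact Or.inl hmn
      · exact Or.inr ⟨hmn, (hsep ⟨m, hmn⟩).2 (by simpa using (hseg ⟨m, hmn⟩).not)⟩
  · rintro ⟨k, hkn, hseg, hk⟩
    have hm : m = k := by
      simp only [m, hseg, Fin.card_filter_val_lt, min_eq_right hkn]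
    rw [hm]
    exact separated_of_initialSegment hmono (fun i => (hc i).1) hseg hk
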